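/- (U(1) decoupling identity.) Let n ≥ 3. Then the sum over all positions at which the letter n can be inserted into the word (1,2,…,n−1) vanishes: Σ_{k=1}^{n−1} PT(1, 2, …, k, n, k+1, …, n−1) = 0 in ℚ(X). -/

import Mathlib

open MvPolynomial

/-- The polynomial ring `ℚ[X_{m,i} : m ∈ {1,2}, 1 ≤ i ≤ n]` in `2n` indeterminates. -/
abbrev MHV.Poly (n : ℕ) := MvPolynomial (Fin 2 × Fin n) ℚ

/-- The field of fractions `ℚ(X)`. -/
abbrev MHV.FF (n : ℕ) := FractionRing (MHV.Poly n)

namespace MHV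

variable {n : ℕ}

/-- The bracket `⟨ij⟩ = X_{1,i}·X_{2,j} − X_{1,j}·X_{2,i}`. -/
noncomputable def bra (i j : Fin n) : Poly n :=
  X ((0 : Fin 2), i) * X ((1 : Fin 2), j) - X ((0 : Fin 2), j) * X ((1 : Fin 2), i)

/-- A triplet: an ordered triple of indices. -/
abbrev Triplet (n : ℕ) := Fin n × Fin n × Fin n

/-- The entries of a triplet are pairwise distinct. -/
def Triplet.Distinct (t : Triplet n) : Prop :=
  t.1 ≠ t.2.1 ∧ t.1 ≠ t.2.2 ∧ t.2.1 ≠ t.2.2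

/-- The set of indices used by a triplet. -/
def Triplet.indices (t : Triplet n) : Finset (Fin n) := {t.1, t.2.1, t.2.2}

/-- A triplet on the index set `I`: pairwise distinct entries, all belonging to `I`. -/
def Triplet.OnSet (I : Finset (Fin n)) (t : Triplet n) : Prop :=
  t.Distinct ∧ t.indices ⊆ I

/-- The row of the matrix `M(S)` corresponding to the triplet `t = (a,b,c)`:
entry `⟨bc⟩` in column `a`, `⟨ca⟩` in column `b`, `⟨ab⟩` in column `c`, `0` elsewhere. -/
noncomputable def rowEntry (t : Triplet n) (c : Fin n) : Poly n :=
  if c = t.1 then bra t.2.1 t.2.2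
  else if c = t.2.1 then bra t.2.2 t.1
  else if c = t.2.2 then bra t.1 t.2.1
  else 0

/-- The determinant of the matrix whose rows are indexed by the triplets of `S` and
whose columns are the columns of `M(S)` belonging to `cols` (in increasing order). -/
noncomputable def detCols (S : List (Triplet n)) (cols : Finset (Fin n)) : Poly n :=
  Matrix.det (Matrix.of fun r c : Fin S.length =>
    ((cols.sort (· ≤ ·))[c.1]?).elim 0 (rowEntry (S.get r)))

/-- The determinant of `M_{ab}(S)`: the matrix `M(S)` (columns indexed by `I`)
with columns `a` and `b` deleted. -/
noncomputable def Mdet (S : List (Triplet n)) (I : Finset (Fin n)) (a b : Fin n) : Poly n :=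
  detCols S ((I.erase a).erase b)

/-- The product `∏_{(a,b,c) ∈ S} ⟨ab⟩·⟨bc⟩·⟨ca⟩`. -/
noncomputable def denom (S : List (Triplet n)) : Poly n :=
  (S.map fun t => bra t.1 t.2.1 * bra t.2.1 t.2.2 * bra t.2.2 t.1).prod

/-- The canonical map from the polynomial ring to its field of fractions. -/
noncomputable def toFF : Poly n →+* FF n := algebraMap (Poly n) (FF n)

/-- The form `f_S = det(M_{ab}(S))² / (⟨ab⟩² · ∏_{(a,b,c) ∈ S} ⟨ab⟩⟨bc⟩⟨ca⟩)`,
where `(a,b)` is the pair of the two smallest elements of `I`. -/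
noncomputable def fForm (S : List (Triplet n)) (I : Finset (Fin n)) : FF n :=
  if h : 2 ≤ I.card then
    have h1 : I.Nonempty := Finset.card_pos.mp (by omega)
    have h2 : (I.erase (I.min' h1)).Nonempty := by
      rw [← Finset.card_pos, Finset.card_erase_of_mem (I.min'_mem h1)]; omega
    toFF (Mdet S I (I.min' h1) ((I.erase (I.min' h1)).min' h2)) ^ 2 /
      (toFF (bra (I.min' h1) ((I.erase (I.min' h1)).min' h2)) ^ 2 * toFF (denom S))
  else 0

/-- The set of all indices used by the triplets of `S`. -/
def indexSet (S : List (Triplet n)) : Finset (Fin n) :=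
  S.foldr (fun t acc => t.indices ∪ acc) ∅

/-- The non-vanishing condition: every nonempty subcollection consisting of `d` triplets
contains at least `d+2` distinct indices in total. -/
def NonVanishing (T : List (Triplet n)) : Prop :=
  ∀ S : List (Triplet n), S.Sublist T → S ≠ [] → S.length + 2 ≤ (indexSet S).card

/-- An MHV collection on `{1,…,n}`: a list of `n−2` triplets with pairwise
distinct entries (triplets on the full index set). -/
def IsMHV (n : ℕ) (T : List (Triplet n)) : Prop :=
  T.length = n - 2 ∧ ∀ t ∈ T, t.Distinct

/-- The unordered pair `{i,j}` belongs to the doublet set `D(T)`: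
`i` and `j` occur together in an odd number of triplets of `T`. -/
def InDoublets (T : List (Triplet n)) (i j : Fin n) : Prop :=
  Odd (T.countP fun t => decide (i ∈ t.indices ∧ j ∈ t.indices))

end MHV

section AUX
open MHV Finset

lemma key_field {K : Type*} [Field K] (ab aN Nb ar Nr br bN Na : K)
    (hS : ab * Nr + bN * ar + Na * br = 0) (e1 : Nb = -bN) (e2 : Na = -aN)
    (hAN : aN ≠ 0) (hbN : bN ≠ 0) (hNr : Nr ≠ 0) :
    ab / (aN * Nb) = ar / (aN * Nr) - br / (bN * Nr) := by
  subst e1 e2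
  field_simp
  linear_combination -hS

lemma aux_div {K : Type*} [Field K] (b q x y z : K) :
    b / (q * x * y * z) = (b / (x * y)) * (q * z)⁻¹ := by
  rw [div_eq_mul_inv, div_eq_mul_inv, mul_inv, mul_inv, mul_inv, mul_inv]
  ring

lemma aux_last {K : Type*} [Field K] (a x y q : K)
    (ha : a ≠ 0) (hx : x ≠ 0) (hy : y ≠ 0) (hq : q ≠ 0) :
    (0 - a / (x * y)) * (q * a)⁻¹ + (q * x * y)⁻¹ = 0 := by
  field_simp
  ring

namespace MHV

lemma bra_self (i : Fin n) : bra i i = 0 := by simp [bra]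

lemma bra_ne_zero {i j : Fin n} (h : i ≠ j) : bra i j ≠ 0 := by
  intro hc
  have := congrArg (eval fun v => if v = ((0 : Fin 2), i) then (1:ℚ) else if v = ((1 : Fin 2), j) then 1 else 0) hc
  simp [bra, Prod.ext_iff, Fin.val_eq_val, h, h.symm] at this

lemma toFF_bra_ne_zero {i j : Fin n} (h : i ≠ j) : toFF (bra i j) ≠ 0 := by
  have hinj : Function.Injective (toFF (n := n)) := IsFractionRing.injective (Poly n) (FF n)
  intro hc
  exact bra_ne_zero h (hinj (by simpa using hc))

lemma schouten (a b c d : Fin n) :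
    bra a b * bra c d + bra b c * bra a d + bra c a * bra b d = 0 := by
  simp only [bra]; ring

lemma toFF_bra_antisymm (i j : Fin n) : toFF (bra i j) = - toFF (bra j i) := by
  rw [← map_neg]; congr 1; simp only [bra]; ring

/-- the letter in position `p` of the word `(0,…,k−1,n−1,k,…,n−2)`. -/
def U1sig (n k p : ℕ) : ℕ := if p < k then p else if p = k then n - 1 else p - 1

/-- natural number to `Fin n`. -/
def U1fn (n : ℕ) (h0 : 0 < n) (j : ℕ) : Fin n := ⟨j % n, Nat.mod_lt _ h0⟩

lemma U1fn_ne (h0 : 0 < n) {i j : ℕ} (hi : i < n) (hj : j < n) (hij : i ≠ j) :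
    U1fn n h0 i ≠ U1fn n h0 j := by
  simp only [U1fn, ne_eq, Fin.mk.injEq, Nat.mod_eq_of_lt hi, Nat.mod_eq_of_lt hj]
  exact hij

lemma U1_prodA {n k : ℕ} (h0 : 0 < n) (hn : 3 ≤ n) (hk1 : 1 ≤ k) (hk2 : k ≤ n - 2) :
    (∏ p ∈ Finset.range n,
        bra (U1fn n h0 (U1sig n k p)) (U1fn n h0 (U1sig n k ((p+1) % n))))
      * bra (U1fn n h0 (k-1)) (U1fn n h0 k)
    = (∏ q ∈ Finset.range (n-2), bra (U1fn n h0 q) (U1fn n h0 (q+1)))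
      * bra (U1fn n h0 (k-1)) (U1fn n h0 (n-1))
      * bra (U1fn n h0 (n-1)) (U1fn n h0 k)
      * bra (U1fn n h0 (n-2)) (U1fn n h0 0) := by
  set f := U1fn n h0 with hf
  set w : ℕ → Poly n := fun p => bra (f (U1sig n k p)) (f (U1sig n k ((p+1) % n))) with hw
  set u : ℕ → Poly n := fun q => bra (f q) (f (q+1)) with hu
  have sig_lt : ∀ p, p < k → U1sig n k p = p := fun p hp => if_pos hp
  have sig_self : U1sig n k k = n - 1 := by simp [U1sig]
  have sig_gt : ∀ p, k < p → U1sig n k p = p - 1 := by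
    intro p hp; simp only [U1sig]; rw [if_neg (by omega), if_neg (by omega)]
  have hIco : Finset.Ico (n-1) n = {n-1} := by ext x; simp [Finset.mem_Ico]; omega
  have hsplit : ∏ p ∈ Finset.range n, w p
      = (∏ p ∈ Finset.Ico 0 (k-1), w p) * (w (k-1) * (w k *
        ((∏ p ∈ Finset.Ico (k+1) (n-1), w p) * w (n-1)))) := by
    rw [Finset.range_eq_Ico,
        ← Finset.prod_Ico_consecutive w (Nat.zero_le (k-1)) (by omega : k-1 ≤ n),
        Finset.prod_eq_prod_Ico_succ_bot (by omega : k-1 < n) w,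
        show k-1+1 = k from by omega,
        Finset.prod_eq_prod_Ico_succ_bot (by omega : k < n) w,
        ← Finset.prod_Ico_consecutive w (by omega : k+1 ≤ n-1) (by omega : n-1 ≤ n),
        hIco, Finset.prod_singleton]
  have e1 : ∀ p ∈ Finset.Ico 0 (k-1), w p = u p := by
    intro p hp
    simp only [Finset.mem_Ico] at hp
    simp only [hw, hu]
    rw [Nat.mod_eq_of_lt (by omega), sig_lt p (by omega), sig_lt (p+1) (by omega)]
  have e2 : w (k-1) = bra (f (k-1)) (f (n-1)) := by
    simp only [hw]
    rw [show k-1+1 = k from by omega, Nat.mod_eq_of_lt (by omega : k < n),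
        sig_lt (k-1) (by omega), sig_self]
  have e3 : w k = bra (f (n-1)) (f k) := by
    simp only [hw]
    rw [Nat.mod_eq_of_lt (by omega : k+1 < n), sig_self, sig_gt (k+1) (by omega),
        show k+1-1 = k from rfl]
  have e4 : ∀ p ∈ Finset.Ico (k+1) (n-1), w p = bra (f (p-1)) (f p) := by
    intro p hp
    simp only [Finset.mem_Ico] at hp
    simp only [hw]
    rw [Nat.mod_eq_of_lt (by omega), sig_gt p (by omega), sig_gt (p+1) (by omega),
        show p+1-1 = p from rfl]
  have e5 : w (n-1) = bra (f (n-2)) (f 0) := by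
    simp only [hw]
    rw [show n-1+1 = n from by omega, Nat.mod_self, sig_gt (n-1) (by omega),
        sig_lt 0 (by omega), show n-1-1 = n-2 from by omega]
  have hB : ∏ p ∈ Finset.Ico (k+1) (n-1), bra (f (p-1)) (f p)
      = ∏ q ∈ Finset.Ico k (n-2), u q := by
    rw [Finset.prod_Ico_eq_prod_range, Finset.prod_Ico_eq_prod_range,
        show n-1-(k+1) = n-2-k from by omega]
    refine Finset.prod_congr rfl fun i hi => ?_
    simp only [hu]
    rw [show k+1+i-1 = k+i from by omega, show k+1+i = k+i+1 from by omega]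
  have hu6 : u (k-1) = bra (f (k-1)) (f k) := by
    simp only [hu]; rw [show k-1+1 = k from by omega]
  have hQ : ∏ q ∈ Finset.range (n-2), u q
      = (∏ p ∈ Finset.Ico 0 (k-1), u p) * (u (k-1) * ∏ q ∈ Finset.Ico k (n-2), u q) := by
    rw [Finset.range_eq_Ico,
        ← Finset.prod_Ico_consecutive u (Nat.zero_le (k-1)) (by omega : k-1 ≤ n-2),
        Finset.prod_eq_prod_Ico_succ_bot (by omega : k-1 < n-2) u,
        show k-1+1 = k from by omega]
  rw [hsplit, Finset.prod_congr rfl e1, e2, e3, Finset.prod_congr rfl e4, hB, e5, hQ, hu6]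
  ring

lemma U1_prodB {n : ℕ} (h0 : 0 < n) (hn : 3 ≤ n) :
    (∏ p ∈ Finset.range n,
        bra (U1fn n h0 (U1sig n (n-1) p)) (U1fn n h0 (U1sig n (n-1) ((p+1) % n))))
    = (∏ q ∈ Finset.range (n-2), bra (U1fn n h0 q) (U1fn n h0 (q+1)))
      * bra (U1fn n h0 (n-2)) (U1fn n h0 (n-1))
      * bra (U1fn n h0 (n-1)) (U1fn n h0 0) := by
  set f := U1fn n h0 with hf
  set k := n - 1 with hk
  set w : ℕ → Poly n := fun p => bra (f (U1sig n k p)) (f (U1sig n k ((p+1) % n))) with hw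
  set u : ℕ → Poly n := fun q => bra (f q) (f (q+1)) with hu
  have sig_lt : ∀ p, p < k → U1sig n k p = p := fun p hp => if_pos hp
  have sig_self : U1sig n k k = n - 1 := by simp [U1sig]
  have hIco : Finset.Ico (n-1) n = {n-1} := by ext x; simp [Finset.mem_Ico]; omega
  have hsplit : ∏ p ∈ Finset.range n, w p
      = (∏ p ∈ Finset.Ico 0 (n-2), w p) * (w (n-2) * w (n-1)) := by
    rw [Finset.range_eq_Ico,
        ← Finset.prod_Ico_consecutive w (Nat.zero_le (n-2)) (by omega : n-2 ≤ n),
        Finset.prod_eq_prod_Ico_succ_bot (by omega : n-2 < n) w,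
        show n-2+1 = n-1 from by omega, hIco, Finset.prod_singleton]
  have e1 : ∀ p ∈ Finset.Ico 0 (n-2), w p = u p := by
    intro p hp
    simp only [Finset.mem_Ico] at hp
    simp only [hw, hu]
    rw [Nat.mod_eq_of_lt (by omega), sig_lt p (by omega), sig_lt (p+1) (by omega)]
  have e2 : w (n-2) = bra (f (n-2)) (f (n-1)) := by
    simp only [hw]
    rw [show n-2+1 = n-1 from by omega, Nat.mod_eq_of_lt (by omega : n-1 < n),
        sig_lt (n-2) (by omega), sig_self]
  have e3 : w (n-1) = bra (f (n-1)) (f 0) := by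
    simp only [hw]
    rw [show n-1+1 = n from by omega, Nat.mod_self, sig_lt 0 (by omega), ← hk, sig_self]
  rw [hsplit, Finset.prod_congr rfl e1, e2, e3, Finset.range_eq_Ico]
  ring

end MHV
end AUX

section AUX2
namespace MHV
variable {n : ℕ}

noncomputable def U1B (n : ℕ) (h0 : 0 < n) (i j : ℕ) : FF n :=
  toFF (bra (U1fn n h0 i) (U1fn n h0 j))

noncomputable def U1Q (n : ℕ) (h0 : 0 < n) : Poly n :=
  ∏ q ∈ Finset.range (n-2), bra (U1fn n h0 q) (U1fn n h0 (q+1))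

noncomputable def U1P (n : ℕ) (h0 : 0 < n) (k : ℕ) : Poly n :=
  ∏ p ∈ Finset.range n,
    bra (U1fn n h0 (U1sig n k p)) (U1fn n h0 (U1sig n k ((p+1) % n)))

noncomputable def U1F (n : ℕ) (h0 : 0 < n) (x : ℕ) : FF n :=
  U1B n h0 x 0 / (U1B n h0 x (n-1) * U1B n h0 (n-1) 0)

lemma U1_PA {n k : ℕ} (h0 : 0 < n) (hn : 3 ≤ n) (hk1 : 1 ≤ k) (hk2 : k ≤ n - 2) :
    toFF (U1P n h0 k) * U1B n h0 (k-1) k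
    = toFF (U1Q n h0) * U1B n h0 (k-1) (n-1) * U1B n h0 (n-1) k * U1B n h0 (n-2) 0 := by
  unfold U1P U1Q U1B
  rw [← map_mul, U1_prodA h0 hn hk1 hk2, map_mul, map_mul, map_mul]

lemma U1_PB {n : ℕ} (h0 : 0 < n) (hn : 3 ≤ n) :
    toFF (U1P n h0 (n-1))
    = toFF (U1Q n h0) * U1B n h0 (n-2) (n-1) * U1B n h0 (n-1) 0 := by
  unfold U1P U1Q U1B
  rw [U1_prodB h0 hn, map_mul, map_mul]

lemma U1Q_ne_zero (h0 : 0 < n) (hn : 3 ≤ n) : toFF (U1Q n h0) ≠ 0 := by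
  unfold U1Q
  rw [map_prod]
  refine Finset.prod_ne_zero_iff.mpr fun q hq => ?_
  simp only [Finset.mem_range] at hq
  exact toFF_bra_ne_zero (U1fn_ne h0 (by omega) (by omega) (by omega))

lemma U1B_ne_zero (h0 : 0 < n) {i j : ℕ} (hi : i < n) (hj : j < n) (hij : i ≠ j) :
    U1B n h0 i j ≠ 0 :=
  toFF_bra_ne_zero (U1fn_ne h0 hi hj hij)

lemma U1_schouten (h0 : 0 < n) (a b c d : ℕ) :
    U1B n h0 a b * U1B n h0 c d + U1B n h0 b c * U1B n h0 a d
      + U1B n h0 c a * U1B n h0 b d = 0 := by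
  unfold U1B
  rw [← map_mul, ← map_mul, ← map_mul, ← map_add, ← map_add, schouten, map_zero]

lemma U1B_antisymm (h0 : 0 < n) (i j : ℕ) : U1B n h0 i j = - U1B n h0 j i := by
  unfold U1B; exact toFF_bra_antisymm _ _

lemma U1_term {n k : ℕ} (h0 : 0 < n) (hn : 3 ≤ n) (hk1 : 1 ≤ k) (hk2 : k ≤ n - 2) :
    (toFF (U1P n h0 k))⁻¹
    = (U1F n h0 (k-1) - U1F n h0 k) * (toFF (U1Q n h0) * U1B n h0 (n-2) 0)⁻¹ := by
  have hb : U1B n h0 (k-1) k ≠ 0 := U1B_ne_zero h0 (by omega) (by omega) (by omega)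
  have hx : U1B n h0 (k-1) (n-1) ≠ 0 := U1B_ne_zero h0 (by omega) (by omega) (by omega)
  have hy : U1B n h0 (n-1) k ≠ 0 := U1B_ne_zero h0 (by omega) (by omega) (by omega)
  have hbN : U1B n h0 k (n-1) ≠ 0 := U1B_ne_zero h0 (by omega) (by omega) (by omega)
  have hNr : U1B n h0 (n-1) 0 ≠ 0 := U1B_ne_zero h0 (by omega) (by omega) (by omega)
  have hPk : toFF (U1P n h0 k)
      = (toFF (U1Q n h0) * U1B n h0 (k-1) (n-1) * U1B n h0 (n-1) k * U1B n h0 (n-2) 0)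
        / U1B n h0 (k-1) k := by
    rw [eq_div_iff hb]; exact U1_PA h0 hn hk1 hk2
  rw [hPk, inv_div, aux_div]
  congr 1
  have hS := U1_schouten h0 (k-1) k (n-1) 0
  have he1 := U1B_antisymm h0 (n-1) k
  have he2 := U1B_antisymm h0 (n-1) (k-1)
  unfold U1F
  exact key_field _ _ _ _ _ _ _ _ hS he1 he2 hx hbN hNr

end MHV
end AUX2


/-- The Parke-Taylor factor `PT(σ) = 1/(⟨σ₁σ₂⟩·⟨σ₂σ₃⟩⋯⟨σ_{n−1}σₙ⟩·⟨σₙσ₁⟩)` of the word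
`σ` (position ↦ letter), as an element of the field of fractions. -/
noncomputable def MHV.PT {n : ℕ} (σ : Fin n → Fin n) : MHV.FF n :=
  (∏ p : Fin n,
    MHV.toFF (MHV.bra (σ p)
      (σ ⟨(p.1 + 1) % n, Nat.mod_lt _ (Nat.lt_of_le_of_lt (Nat.zero_le _) p.2)⟩)))⁻¹

/-- U(1) decoupling identity: the sum over all positions at which the
letter `n` can be inserted into the word `(1,2,…,n−1)` of the corresponding Parke-Taylor
factors vanishes (letters written 0-indexed: the letter `n−1` is inserted into
`(0,1,…,n−2)` after position `k−1`, `k = 1,…,n−1`). -/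
theorem statement17 {n : ℕ} (hn : 3 ≤ n) :
    ∑ k ∈ Finset.Icc 1 (n - 1),
      MHV.PT (fun p : Fin n =>
        if p.1 < k then p
        else if p.1 = k then ⟨n - 1, by omega⟩
        else ⟨p.1 - 1, by have := p.2; omega⟩) = 0 := by
  classical
  have h0 : 0 < n := by omega
  have hσ : ∀ (k : ℕ) (q : Fin n),
      (if q.1 < k then q else if q.1 = k then (⟨n - 1, by omega⟩ : Fin n)
        else ⟨q.1 - 1, by have := q.2; omega⟩) = MHV.U1fn n h0 (MHV.U1sig n k q.1) := by
    intro k q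
    have hq := q.isLt
    apply Fin.ext
    simp only [MHV.U1fn, MHV.U1sig]
    split_ifs <;> exact (Nat.mod_eq_of_lt (by omega)).symm
  have hPT : ∀ k ∈ Finset.Icc 1 (n-1),
      MHV.PT (fun p : Fin n =>
        if p.1 < k then p
        else if p.1 = k then ⟨n - 1, by omega⟩
        else ⟨p.1 - 1, by have := p.2; omega⟩)
      = (MHV.toFF (MHV.U1P n h0 k))⁻¹ := by
    intro k hk
    rw [MHV.PT]
    congr 1
    have step : (∏ p : Fin n,
        MHV.toFF (MHV.bra (MHV.U1fn n h0 (MHV.U1sig n k p.1))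
          (MHV.U1fn n h0 (MHV.U1sig n k ((p.1+1) % n)))))
        = MHV.toFF (MHV.U1P n h0 k) := by
      rw [MHV.U1P, map_prod]
      exact Fin.prod_univ_eq_prod_range
        (fun i => MHV.toFF (MHV.bra (MHV.U1fn n h0 (MHV.U1sig n k i))
          (MHV.U1fn n h0 (MHV.U1sig n k ((i+1) % n))))) n
    rw [← step]
    refine Finset.prod_congr rfl fun p _ => ?_
    congr 1
    exact congrArg₂ MHV.bra (hσ k p) (hσ k _)
  rw [Finset.sum_congr rfl hPT]
  rw [show n - 1 = (n-2)+1 from by omega,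
      Finset.sum_Icc_succ_top (by omega : 1 ≤ (n-2)+1)]
  rw [Finset.sum_congr rfl (fun k hk => by
    simp only [Finset.mem_Icc] at hk
    exact MHV.U1_term h0 hn hk.1 hk.2)]
  rw [← Finset.sum_mul]
  have htel : ∑ k ∈ Finset.Icc 1 (n-2), (MHV.U1F n h0 (k-1) - MHV.U1F n h0 k)
      = MHV.U1F n h0 0 - MHV.U1F n h0 (n-2) := by
    rw [← Finset.Ico_add_one_right_eq_Icc, Finset.sum_Ico_eq_sum_range,
        show (n-2)+1-1 = n-2 from rfl]
    rw [Finset.sum_congr rfl (fun i _ => by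
      rw [show 1+i-1 = i from by omega, show 1+i = i+1 from by omega])]
    exact Finset.sum_range_sub' (MHV.U1F n h0) (n-2)
  rw [htel]
  have hF0 : MHV.U1F n h0 0 = 0 := by
    unfold MHV.U1F MHV.U1B
    rw [MHV.bra_self, map_zero, zero_div]
  have hlast : MHV.toFF (MHV.U1P n h0 ((n-2)+1))
      = MHV.toFF (MHV.U1Q n h0) * MHV.U1B n h0 (n-2) (n-1) * MHV.U1B n h0 (n-1) 0 := by
    rw [show (n-2)+1 = n-1 from by omega]
    exact MHV.U1_PB h0 hn
  rw [hF0, hlast]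
  unfold MHV.U1F
  exact aux_last (MHV.U1B n h0 (n-2) 0) (MHV.U1B n h0 (n-2) (n-1)) (MHV.U1B n h0 (n-1) 0)
    (MHV.toFF (MHV.U1Q n h0))
    (MHV.U1B_ne_zero h0 (by omega) (by omega) (by omega))
    (MHV.U1B_ne_zero h0 (by omega) (by omega) (by omega))
    (MHV.U1B_ne_zero h0 (by omega) (by omega) (by omega))
    (MHV.U1Q_ne_zero h0 hn)
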